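/- Let M be a simple rank-3 matroid on n elements with no coloops. Then (n−2)·c̄₁²(M) ≥ (2n−6)·c̄₂(M), i.e. c̄₁²(M)/c̄₂(M) ≥ (2n−6)/(n−2), with equality if and only if M is the uniform matroid U_{3,n}. -/

import Mathlib

/-!
Counting ordered pairs of distinct points by the line they span gives
`∑_L |L|(|L|-1) = n(n-1)`, and with this identity
`(n-2)·c̄₁²(M) - (2n-6)·c̄₂(M) = ∑_L (|L|-2)(n-1-|L|)`, the sum running over the lines
(rank-2 flats) of `M`. A line has at least two points, and since there are no coloops it misses
at least two points, so every term is nonnegative and vanishes exactly when `|L| = 2`.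
A simple rank-3 matroid all of whose lines have two points is `U_{3,n}`.
-/

/- Chern numbers of matroids (Mannino). Background definitions. -/

open scoped Matroid
open Finset

namespace Paper

variable {α : Type*}

/-- The rank of a set in a matroid: the maximal size of an independent subset. -/
noncomputable def mrk (M : Matroid α) (X : Set α) : ℕ :=
  sSup (Set.ncard '' {I | M.Indep I ∧ I ⊆ X})

/-- A matroid is simple if it has no loops and no parallel pairs, i.e. every
subset of the ground set with at most two elements is independent. -/
def Simple (M : Matroid α) : Prop := ∀ e ∈ M.E, ∀ f ∈ M.E, M.Indep {e, f}

/-- A matroid is loopless if every singleton of the ground set is independent. -/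
def Loopless (M : Matroid α) : Prop := ∀ e ∈ M.E, M.Indep {e}

/-- A coloop is an element contained in every base. -/
def Coloop (M : Matroid α) (e : α) : Prop := e ∈ M.E ∧ ∀ B, M.IsBase B → e ∈ B

/-- `t M m` is the number of rank-2 flats of `M` of size `m`. -/
noncomputable def t (M : Matroid α) (m : ℕ) : ℕ :=
  {F : Set α | M.IsFlat F ∧ mrk M F = 2 ∧ F.ncard = m}.ncard

/-- The first Chern number `c̄₁²` of a simple rank-3 matroid,
`9 - 5n + ∑_{m ≥ 2} (3m-4) t_m`. -/
noncomputable def c1sq (M : Matroid α) : ℤ :=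
  9 - 5 * (M.E.ncard : ℤ) +
    ∑ m ∈ Finset.Icc 2 M.E.ncard, (3 * (m : ℤ) - 4) * t M m

/-- The second Chern number `c̄₂` of a simple rank-3 matroid,
`3 - 2n + ∑_{m ≥ 2} (m-1) t_m`. -/
noncomputable def c2 (M : Matroid α) : ℤ :=
  3 - 2 * (M.E.ncard : ℤ) +
    ∑ m ∈ Finset.Icc 2 M.E.ncard, ((m : ℤ) - 1) * t M m

/-- The beta invariant of a matroid on a finite type (Crapo's formula):
`β(M) = (-1)^{r(E)} ∑_{S ⊆ E} (-1)^{|S|} r(S)`. -/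
noncomputable def beta (M : Matroid α) [Fintype α] : ℤ :=
  (-1) ^ (mrk M M.E) *
    ∑ S ∈ (Set.toFinite M.E).toFinset.powerset,
      (-1 : ℤ) ^ S.card * (mrk M (S : Set α) : ℤ)

/-- `M` is the uniform matroid of rank `r` on its ground set: the independent
sets are exactly the finite subsets of the ground set of size at most `r`. -/
def IsUniform (M : Matroid α) (r : ℕ) : Prop :=
  ∀ I, I ⊆ M.E → (M.Indep I ↔ I.Finite ∧ I.ncard ≤ r)

end Paper

open Paper

namespace Paper

variable {α : Type*} {M : Matroid α} {X F I : Set α} {e f : α}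

lemma cast_mrk_eq_eRk [M.RankFinite] (X : Set α) : (mrk M X : ℕ∞) = M.eRk X := by
  obtain ⟨I, hI⟩ := M.exists_isBasis' X
  have hIfin : I.Finite := hI.indep.finite
  have hmax : IsGreatest (Set.ncard '' {J | M.Indep J ∧ J ⊆ X}) I.ncard := by
    refine ⟨⟨I, ⟨hI.indep, hI.subset⟩, rfl⟩, ?_⟩
    rintro _ ⟨J, ⟨hJ, hJX⟩, rfl⟩
    have hJI : J.encard ≤ I.encard := hI.encard_eq_eRk ▸ hJ.encard_le_eRk_of_subset hJX
    rw [← hJ.finite.cast_ncard_eq, ← hIfin.cast_ncard_eq] at hJI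
    exact_mod_cast hJI
  rw [mrk, hmax.csSup_eq, hIfin.cast_ncard_eq, hI.encard_eq_eRk]

lemma mrk_eq_iff_eRk_eq [M.RankFinite] {k : ℕ} : mrk M X = k ↔ M.eRk X = k := by
  rw [← cast_mrk_eq_eRk, Nat.cast_inj]

lemma Simple.indep_of_ncard_le_two (hs : Simple M) (hI : I ⊆ M.E) (hfin : I.Finite)
    (h : I.ncard ≤ 2) : M.Indep I := by
  obtain h0 | h1 | h2 : I.ncard = 0 ∨ I.ncard = 1 ∨ I.ncard = 2 := by omega
  · rw [(Set.ncard_eq_zero hfin).mp h0]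
    exact M.empty_indep
  · obtain ⟨e, rfl⟩ := Set.ncard_eq_one.mp h1
    simpa using hs e (hI rfl) e (hI rfl)
  · obtain ⟨e, f, -, rfl⟩ := Set.ncard_eq_two.mp h2
    exact hs e (hI (by simp)) f (hI (by simp))

lemma Simple.eRk_pair (hs : Simple M) (he : e ∈ M.E) (hf : f ∈ M.E) (hef : e ≠ f) :
    M.eRk {e, f} = 2 := by
  rw [(hs e he f hf).eRk_eq_encard, Set.encard_pair hef]

lemma Simple.eq_closure_pair_of_isFlat (hs : Simple M) (hF : M.IsFlat F) (hF2 : M.eRk F = 2)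
    (he : e ∈ F) (hf : f ∈ F) (hef : e ≠ f) : F = M.closure {e, f} := by
  have hB : M.IsBasis {e, f} F :=
    (hs e (hF.subset_ground he) f (hF.subset_ground hf)).isBasis_of_eRk_ge
      (Set.toFinite _) (Set.pair_subset he hf)
      (by rw [hs.eRk_pair (hF.subset_ground he) (hF.subset_ground hf) hef, hF2])
      hF.subset_ground
  rw [hB.closure_eq_closure, hF.closure]

/-- A set of less than full rank misses some element of every base. -/
lemma one_lt_encard_diff_of_eRk_lt (hc : ∀ e, ¬ Coloop M e) (hF : M.eRk F < M.eRank) :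
    1 < (M.E \ F).encard := by
  have hmeet : ∀ B, M.IsBase B → ∃ x ∈ M.E \ F, x ∈ B := by
    intro B hB
    by_contra! h
    have hBF : B ⊆ F := fun x hx => by_contra fun hxF => h x ⟨hB.subset_ground hx, hxF⟩ hx
    exact (M.eRk_mono hBF).not_gt (hB.eRk_eq_eRank ▸ hF)
  by_contra! hle
  obtain ⟨B, hB⟩ := M.exists_isBase
  obtain ⟨x, hx, -⟩ := hmeet B hB
  obtain h0 | ⟨y, hy⟩ := Set.encard_le_one_iff_eq.mp hle
  · simp [h0] at hx
  refine hc x ⟨hx.1, fun B' hB' => ?_⟩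
  obtain ⟨z, hz, hzB'⟩ := hmeet B' hB'
  rw [hy] at hx hz
  rwa [hx, ← hz]

noncomputable def lineFinset (M : Matroid α) [M.Finite] : Finset (Set α) :=
  (M.ground_finite.finite_subsets.subset fun _ hF => hF.1.subset_ground :
    {F : Set α | M.IsFlat F ∧ M.eRk F = 2}.Finite).toFinset

section lines

variable [M.Finite]

lemma mem_lineFinset : F ∈ lineFinset M ↔ M.IsFlat F ∧ M.eRk F = 2 := by
  simp [lineFinset]

lemma Simple.closure_pair_mem_lineFinset (hs : Simple M) (he : e ∈ M.E) (hf : f ∈ M.E)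
    (hef : e ≠ f) : M.closure {e, f} ∈ lineFinset M :=
  mem_lineFinset.mpr ⟨M.isFlat_closure _, by rw [M.eRk_closure_eq, hs.eRk_pair he hf hef]⟩

lemma Simple.closure_pair_eq_iff (hs : Simple M) (hF : F ∈ lineFinset M) (he : e ∈ M.E)
    (hf : f ∈ M.E) (hef : e ≠ f) : M.closure {e, f} = F ↔ e ∈ F ∧ f ∈ F := by
  obtain ⟨hFflat, hF2⟩ := mem_lineFinset.mp hF
  refine ⟨fun h => ?_, fun ⟨heF, hfF⟩ =>
    (hs.eq_closure_pair_of_isFlat hFflat hF2 heF hfF hef).symm⟩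
  have hsub := M.subset_closure {e, f} (Set.pair_subset he hf)
  rw [h] at hsub
  exact ⟨hsub (by simp), hsub (by simp)⟩

lemma two_le_ncard_of_mem_lineFinset (hF : F ∈ lineFinset M) : 2 ≤ F.ncard := by
  obtain ⟨hFflat, hF2⟩ := mem_lineFinset.mp hF
  have h := M.eRk_le_encard F
  rw [hF2, ← (M.ground_finite.subset hFflat.subset_ground).cast_ncard_eq] at h
  exact_mod_cast h

lemma t_eq_card_filter (m : ℕ) : t M m = ((lineFinset M).filter (·.ncard = m)).card := by
  rw [t, ← Set.ncard_coe_finset]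
  congr 1
  ext F
  simp [mem_lineFinset, mrk_eq_iff_eRk_eq, and_assoc]

lemma sum_Icc_mul_t (g : ℕ → ℤ) :
    ∑ m ∈ Icc 2 M.E.ncard, g m * t M m = ∑ F ∈ lineFinset M, g F.ncard := by
  have hmaps : ∀ F ∈ lineFinset M, F.ncard ∈ Icc 2 M.E.ncard := fun F hF =>
    mem_Icc.mpr ⟨two_le_ncard_of_mem_lineFinset hF,
      Set.ncard_le_ncard (mem_lineFinset.mp hF).1.subset_ground M.ground_finite⟩
  rw [← sum_fiberwise_of_maps_to hmaps]
  refine sum_congr rfl fun m _ => ?_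
  rw [sum_congr rfl fun F hF => congrArg g (mem_filter.mp hF).2, sum_const, t_eq_card_filter,
    nsmul_eq_mul, mul_comm]

/-- Every pair of distinct points lies on exactly one line. -/
lemma Simple.sum_lineFinset_ncard_mul_pred (hs : Simple M) :
    ∑ F ∈ lineFinset M, (F.ncard : ℤ) * (F.ncard - 1) = M.E.ncard * (M.E.ncard - 1) := by
  classical
  have hoff (s : Finset α) : (s.offDiag.card : ℤ) = s.card * (s.card - 1) := by
    rw [offDiag_card, Nat.cast_sub (Nat.le_mul_self _)]
    push_cast
    ring
  set E := M.ground_finite.toFinset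
  have hmaps : ∀ p ∈ E.offDiag, M.closure {p.1, p.2} ∈ lineFinset M := fun p hp => by
    obtain ⟨h1, h2, hne⟩ := mem_offDiag.mp hp
    exact hs.closure_pair_mem_lineFinset (by simpa [E] using h1) (by simpa [E] using h2) hne
  have hfiber : ∀ F ∈ lineFinset M,
      ((E.offDiag.filter fun p => M.closure {p.1, p.2} = F).card : ℤ) =
        F.ncard * (F.ncard - 1) := by
    intro F hF
    have hFE : F ⊆ M.E := (mem_lineFinset.mp hF).1.subset_ground
    have hFfin : F.Finite := M.ground_finite.subset hFE
    have hfilter : (E.offDiag.filter fun p => M.closure {p.1, p.2} = F) =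
        hFfin.toFinset.offDiag := by
      ext ⟨e, f⟩
      simp only [mem_filter, mem_offDiag, Set.Finite.mem_toFinset, E]
      constructor
      · rintro ⟨⟨he, hf, hef⟩, hcl⟩
        exact ⟨((hs.closure_pair_eq_iff hF he hf hef).mp hcl).1,
          ((hs.closure_pair_eq_iff hF he hf hef).mp hcl).2, hef⟩
      · rintro ⟨he, hf, hef⟩
        exact ⟨⟨hFE he, hFE hf, hef⟩,
          (hs.closure_pair_eq_iff hF (hFE he) (hFE hf) hef).mpr ⟨he, hf⟩⟩
    rw [hfilter, hoff, Set.ncard_eq_toFinset_card _ hFfin]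
  calc ∑ F ∈ lineFinset M, (F.ncard : ℤ) * (F.ncard - 1)
      = ∑ F ∈ lineFinset M, ((E.offDiag.filter fun p => M.closure {p.1, p.2} = F).card : ℤ) :=
        (sum_congr rfl hfiber).symm
    _ = E.offDiag.card := by rw [card_eq_sum_card_fiberwise hmaps, Nat.cast_sum]
    _ = M.E.ncard * (M.E.ncard - 1) := by rw [hoff, Set.ncard_eq_toFinset_card _ M.ground_finite]

lemma ncard_add_two_le_of_mem_lineFinset (hc : ∀ e, ¬ Coloop M e) (hr : M.eRank = 3)
    (hF : F ∈ lineFinset M) : F.ncard + 2 ≤ M.E.ncard := by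
  obtain ⟨hFflat, hF2⟩ := mem_lineFinset.mp hF
  have h := one_lt_encard_diff_of_eRk_lt hc (by rw [hF2, hr]; norm_num)
  rw [← M.ground_finite.sdiff.cast_ncard_eq, Set.ncard_sdiff hFflat.subset_ground
    (M.ground_finite.subset hFflat.subset_ground)] at h
  have hle := Set.ncard_le_ncard hFflat.subset_ground M.ground_finite
  have : 1 < M.E.ncard - F.ncard := by exact_mod_cast h
  omega

lemma isUniform_three_iff (hs : Simple M) (hr : M.eRank = 3) :
    IsUniform M 3 ↔ ∀ F ∈ lineFinset M, F.ncard = 2 := by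
  constructor
  · intro hu F hF
    obtain ⟨hFflat, hF2⟩ := mem_lineFinset.mp hF
    by_contra hne
    have h3 : 3 ≤ F.ncard := by have := two_le_ncard_of_mem_lineFinset hF; omega
    obtain ⟨T, hTF, hT3⟩ := Set.exists_subset_card_eq h3
    have hTE := hTF.trans hFflat.subset_ground
    have hTfin := M.ground_finite.subset hTE
    have hT := ((hu T hTE).mpr ⟨hTfin, hT3.le⟩).encard_le_eRk_of_subset hTF
    rw [← hTfin.cast_ncard_eq, hT3, hF2] at hT
    norm_num at hT
  · intro hl I hI
    refine ⟨fun hind => ⟨hind.finite, ?_⟩, fun ⟨hfin, hle⟩ => ?_⟩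
    · have h := hind.encard_le_eRank
      rw [← hind.finite.cast_ncard_eq, hr] at h
      exact_mod_cast h
    obtain h2 | h3 : I.ncard ≤ 2 ∨ I.ncard = 3 := by omega
    · exact hs.indep_of_ncard_le_two hI hfin h2
    obtain ⟨e, f, g, hef, heg, hfg, rfl⟩ := Set.ncard_eq_three.mp h3
    have heE : e ∈ M.E := hI (by simp)
    have hfE : f ∈ M.E := hI (by simp)
    have hgE : g ∈ M.E := hI (by simp)
    -- the line through `f` and `g` has no third point, so it misses `e`
    have hcl : M.closure {f, g} = {f, g} :=
      (Set.eq_of_subset_of_ncard_le (M.subset_closure _ (Set.pair_subset hfE hgE))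
        (by rw [hl _ (hs.closure_pair_mem_lineFinset hfE hgE hfg), Set.ncard_pair hfg])
        (M.ground_finite.subset (M.closure_subset_ground _))).symm
    exact ((hs f hfE g hgE).insert_indep_iff_of_notMem (by simp [hef, heg])).mpr
      ⟨heE, by rw [hcl]; simp [hef, heg]⟩

lemma Simple.chern_gap_eq_sum (hs : Simple M) :
    ((M.E.ncard : ℤ) - 2) * c1sq M - (2 * M.E.ncard - 6) * c2 M =
      ∑ F ∈ lineFinset M, ((F.ncard : ℤ) - 2) * (M.E.ncard - 1 - F.ncard) := by
  rw [c1sq, c2, sum_Icc_mul_t (fun m => 3 * (m : ℤ) - 4), sum_Icc_mul_t (fun m => (m : ℤ) - 1)]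
  have hsplit : ∑ F ∈ lineFinset M, ((F.ncard : ℤ) - 2) * (M.E.ncard - 1 - F.ncard) =
      (M.E.ncard - 2) * ∑ F ∈ lineFinset M, (3 * (F.ncard : ℤ) - 4)
        - (2 * M.E.ncard - 6) * ∑ F ∈ lineFinset M, ((F.ncard : ℤ) - 1)
        - ∑ F ∈ lineFinset M, (F.ncard : ℤ) * (F.ncard - 1) := by
    rw [mul_sum, mul_sum, ← sum_sub_distrib, ← sum_sub_distrib]
    exact sum_congr rfl fun _ _ => by ring
  rw [hsplit, hs.sum_lineFinset_ncard_mul_pred]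
  ring

end lines

end Paper

/-- For a simple rank-3 matroid on `n` elements with no coloops,
`(n-2)·c̄₁²(M) ≥ (2n-6)·c̄₂(M)`, with equality iff `M` is the uniform matroid `U_{3,n}`. -/
theorem stmt_9 {α : Type*} (M : Matroid α) (n : ℕ) (hE : M.E.Finite)
    (hn : M.E.ncard = n) (hs : Simple M) (hr : mrk M M.E = 3)
    (hc : ∀ e, ¬ Coloop M e) :
    (2 * (n : ℤ) - 6) * c2 M ≤ ((n : ℤ) - 2) * c1sq M ∧
      (((n : ℤ) - 2) * c1sq M = (2 * (n : ℤ) - 6) * c2 M ↔ IsUniform M 3) := by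
  have : M.Finite := ⟨hE⟩
  have hr3 : M.eRank = 3 := by rw [← M.eRk_ground, ← cast_mrk_eq_eRk, hr]; rfl
  subst hn
  have hterm : ∀ F ∈ lineFinset M,
      0 ≤ (F.ncard : ℤ) - 2 ∧ 0 < (M.E.ncard : ℤ) - 1 - F.ncard := fun F hF => by
    have := two_le_ncard_of_mem_lineFinset hF
    have := ncard_add_two_le_of_mem_lineFinset hc hr3 hF
    omega
  have hnonneg F (hF : F ∈ lineFinset M) := mul_nonneg (hterm F hF).1 (hterm F hF).2.le
  rw [← sub_nonneg, ← sub_eq_zero, hs.chern_gap_eq_sum, isUniform_three_iff hs hr3,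
    sum_eq_zero_iff_of_nonneg hnonneg]
  refine ⟨sum_nonneg hnonneg, forall₂_congr fun F hF => ?_⟩
  rw [mul_eq_zero, or_iff_left (hterm F hF).2.ne', sub_eq_zero]
  norm_cast
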